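/- arXiv:2502.03786 — 4 statements merged into one kernel-verified Lean document; each statement's English description precedes it below -/
import Mathlib

section
/- For the Hénon–Heiles system with potential V(q₁,q₂)=q₁(a q₂²+b q₁²), the explicit bivector P̃ is an invariant of the Hamiltonian flow: the Lie derivative of P̃ along the Hamiltonian vector field X vanishes identically, i.e. for all indices i,j one has Σ_k ( X^k ∂P̃^{ij}/∂x^k − P̃^{kj} ∂X^i/∂x^k − P̃^{ik} ∂X^j/∂x^k ) = 0 on all of ℝ⁴. -/
open Real

noncomputable section

/-- Partial derivative of `F` in the `k`-th coordinate direction at `x`. -/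
def pd (F : (Fin 4 → ℝ) → ℝ) (k : Fin 4) (x : Fin 4 → ℝ) : ℝ :=
  fderiv ℝ F x (Pi.single k 1)

/-- The canonical Poisson bivector on ℝ⁴. -/
def Pcan : Matrix (Fin 4) (Fin 4) ℝ :=
  !![0, 0, 1, 0; 0, 0, 0, 1; -1, 0, 0, 0; 0, -1, 0, 0]

/-- Lie derivative of a bivector field `T` along a vector field `Xf`:
`(L_X T)^{ij} = Σ_k ( X^k ∂T^{ij}/∂x^k − T^{kj} ∂X^i/∂x^k − T^{ik} ∂X^j/∂x^k )`. -/
def lieDerivBiv (Xf : (Fin 4 → ℝ) → Fin 4 → ℝ)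
    (T : (Fin 4 → ℝ) → Matrix (Fin 4) (Fin 4) ℝ)
    (i j : Fin 4) (x : Fin 4 → ℝ) : ℝ :=
  ∑ k, (Xf x k * pd (fun y => T y i j) k x
      - T x k j * pd (fun y => Xf y i) k x
      - T x i k * pd (fun y => Xf y j) k x)

/-- Lie derivative of a 2-form `ω` along a vector field `Xf`:
`(L_X ω)_{ij} = Σ_k ( X^k ∂ω_{ij}/∂x^k + ω_{kj} ∂X^k/∂x^i + ω_{ik} ∂X^k/∂x^j )`. -/
def lieDerivForm (Xf : (Fin 4 → ℝ) → Fin 4 → ℝ)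
    (ω : (Fin 4 → ℝ) → Matrix (Fin 4) (Fin 4) ℝ)
    (i j : Fin 4) (x : Fin 4 → ℝ) : ℝ :=
  ∑ k, (Xf x k * pd (fun y => ω y i j) k x
      + ω x k j * pd (fun y => Xf y k) i x
      + ω x i k * pd (fun y => Xf y k) j x)

/-- The Jacobiator of a bivector field `A`; `A` satisfies the Jacobi identity iff it
vanishes for all indices `i j k`. -/
def jac (A : (Fin 4 → ℝ) → Matrix (Fin 4) (Fin 4) ℝ)
    (i j k : Fin 4) (x : Fin 4 → ℝ) : ℝ :=
  ∑ l, (A x l i * pd (fun y => A y j k) l x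
      + A x l j * pd (fun y => A y k i) l x
      + A x l k * pd (fun y => A y i j) l x)

/-- The mixed Schouten bracket expression of two bivector fields `A` and `B`. -/
def mixedSchouten (A B : (Fin 4 → ℝ) → Matrix (Fin 4) (Fin 4) ℝ)
    (i j k : Fin 4) (x : Fin 4 → ℝ) : ℝ :=
  ∑ l, (A x l i * pd (fun y => B y j k) l x
      + A x l j * pd (fun y => B y k i) l x
      + A x l k * pd (fun y => B y i j) l x
      + B x l i * pd (fun y => A y j k) l x
      + B x l j * pd (fun y => A y k i) l x
      + B x l k * pd (fun y => A y i j) l x)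

/-- Hénon–Heiles potential `V = q₁ (a q₂² + b q₁²)`. -/
def VHH (a b : ℝ) (x : Fin 4 → ℝ) : ℝ := x 0 * (a * (x 1) ^ 2 + b * (x 0) ^ 2)

/-- Hénon–Heiles Hamiltonian. -/
def HHH (a b : ℝ) (x : Fin 4 → ℝ) : ℝ := ((x 2) ^ 2 + (x 3) ^ 2) / 2 + VHH a b x

/-- Hénon–Heiles Hamiltonian vector field `X = (p₁, p₂, −∂V/∂q₁, −∂V/∂q₂)`. -/
def XHH (a b : ℝ) (x : Fin 4 → ℝ) : Fin 4 → ℝ :=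
  ![x 2, x 3, -(pd (VHH a b) 0 x), -(pd (VHH a b) 1 x)]

/-- The invariant bivector `P̃` of the Hénon–Heiles system. -/
def PtHH (a b : ℝ) (x : Fin 4 → ℝ) : Matrix (Fin 4) (Fin 4) ℝ :=
  let q1 := x 0; let q2 := x 1; let p1 := x 2; let p2 := x 3
  let e12 := (4 / 3) * (q2 * p1 - q1 * p2)
  let e13 := p1 ^ 2 - p2 ^ 2 - (2 / 3) * a * q1 * q2 ^ 2 + 2 * b * q1 ^ 3
  let e14 := 2 * p1 * p2 + (8 / 3) * a * q1 ^ 2 * q2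
  let e23 := 2 * p1 * p2 + (4 / 3) * a * q2 ^ 3 + 4 * b * q1 ^ 2 * q2
  let e24 := p2 ^ 2 - p1 ^ 2 + (2 / 3) * a * q1 * q2 ^ 2 - 2 * b * q1 ^ 3
  let e34 := 4 * a * q1 * q2 * p1 - (2 * a * q2 ^ 2 + 6 * b * q1 ^ 2) * p2
  !![0, e12, e13, e14;
     -(e12), 0, e23, e24;
     -(e13), -(e23), 0, e34;
     -(e14), -(e24), -(e34), 0]

/-- The invariant 2-form `ω̃` of the Hénon–Heiles system. -/
def OmHH (a b : ℝ) (x : Fin 4 → ℝ) : Matrix (Fin 4) (Fin 4) ℝ :=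
  let q1 := x 0; let q2 := x 1; let p1 := x 2; let p2 := x 3
  let w12 := ((a * q2 ^ 2 + 3 * b * q1 ^ 2) / 2) * p2 - a * q1 * q2 * p1
  let w13 := a * q1 * q2 ^ 2 / 6 - b * q1 ^ 3 / 2 - (p1 ^ 2 - p2 ^ 2) / 4
  let w14 := -(a * q2 ^ 3 / 3 + b * q1 ^ 2 * q2 + p1 * p2 / 2)
  let w23 := -(2 * a * q1 ^ 2 * q2 / 3 + p1 * p2 / 2)
  let w24 := -(a * q1 * q2 ^ 2) / 6 + b * q1 ^ 3 / 2 + (p1 ^ 2 - p2 ^ 2) / 4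
  let w34 := (q1 * p2 - q2 * p1) / 3
  !![0, w12, w13, w14;
     -(w12), 0, w23, w24;
     -(w13), -(w23), 0, w34;
     -(w14), -(w24), -(w34), 0]

/-! `L_X` preserves antisymmetry, so for the antisymmetric `P̃` only the six entries with `i < j`
need to be checked; since `X` and `P̃` are polynomial, each of these is a polynomial identity in
`q, p, a, b`. -/

section PartialDerivatives

variable {f g : (Fin 4 → ℝ) → ℝ} {x : Fin 4 → ℝ}

lemma pd_const (c : ℝ) (k : Fin 4) : pd (fun _ => c) k x = 0 := by
  simp [pd]

lemma pd_coord (i k : Fin 4) : pd (fun y => y i) k x = if i = k then 1 else 0 := by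
  rw [pd, show (fun y : Fin 4 → ℝ => y i) = ContinuousLinearMap.proj (R := ℝ) i from rfl,
    ContinuousLinearMap.fderiv]
  simp [Pi.single_apply]

lemma pd_neg (k : Fin 4) : pd (fun y => -f y) k x = -pd f k x := by
  simp [pd]

lemma pd_add (hf : DifferentiableAt ℝ f x) (hg : DifferentiableAt ℝ g x) (k : Fin 4) :
    pd (fun y => f y + g y) k x = pd f k x + pd g k x := by
  simp [pd, fderiv_fun_add hf hg]

lemma pd_sub (hf : DifferentiableAt ℝ f x) (hg : DifferentiableAt ℝ g x) (k : Fin 4) :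
    pd (fun y => f y - g y) k x = pd f k x - pd g k x := by
  simp [pd, fderiv_fun_sub hf hg]

lemma pd_mul (hf : DifferentiableAt ℝ f x) (hg : DifferentiableAt ℝ g x) (k : Fin 4) :
    pd (fun y => f y * g y) k x = pd f k x * g x + f x * pd g k x := by
  simp [pd, fderiv_fun_mul hf hg]
  ring

lemma pd_pow (hf : DifferentiableAt ℝ f x) (n : ℕ) (k : Fin 4) :
    pd (fun y => f y ^ n) k x = n * f x ^ (n - 1) * pd f k x := by
  have h := (hasDerivAt_pow n (f x)).comp_hasFDerivAt x hf.hasFDerivAt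
  rw [pd, show (fun y => f y ^ n) = (fun t : ℝ => t ^ n) ∘ f from rfl, h.fderiv]
  simp [pd]

end PartialDerivatives

section Antisymmetry

variable {Xf : (Fin 4 → ℝ) → Fin 4 → ℝ} {T : (Fin 4 → ℝ) → Matrix (Fin 4) (Fin 4) ℝ}

theorem lieDerivBiv_swap (hT : ∀ y i j, T y j i = -T y i j) (i j : Fin 4) (x : Fin 4 → ℝ) :
    lieDerivBiv Xf T j i x = -lieDerivBiv Xf T i j x := by
  have hTji : (fun y => T y j i) = fun y => -T y i j := funext fun y => hT y i j
  rw [lieDerivBiv, lieDerivBiv, ← Finset.sum_neg_distrib, hTji]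
  refine Finset.sum_congr rfl fun k _ => ?_
  rw [pd_neg, hT x k i, hT x j k]
  ring

theorem lieDerivBiv_self_eq_zero (hT : ∀ y i j, T y j i = -T y i j) (i : Fin 4) (x : Fin 4 → ℝ) :
    lieDerivBiv Xf T i i x = 0 :=
  CharZero.eq_neg_self_iff.mp (lieDerivBiv_swap hT i i x)

end Antisymmetry

lemma pd_VHH_zero (a b : ℝ) (x : Fin 4 → ℝ) :
    pd (VHH a b) 0 x = a * x 1 ^ 2 + 3 * b * x 0 ^ 2 := by
  change pd (fun y => y 0 * (a * y 1 ^ 2 + b * y 0 ^ 2)) _ x = _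
  simp (disch := fun_prop) only [pd_mul, pd_add, pd_pow, pd_coord, pd_const, Fin.isValue,
    Fin.reduceEq, ↓reduceIte]
  ring

lemma pd_VHH_one (a b : ℝ) (x : Fin 4 → ℝ) : pd (VHH a b) 1 x = 2 * a * x 0 * x 1 := by
  change pd (fun y => y 0 * (a * y 1 ^ 2 + b * y 0 ^ 2)) _ x = _
  simp (disch := fun_prop) only [pd_mul, pd_add, pd_pow, pd_coord, pd_const, Fin.isValue,
    Fin.reduceEq, ↓reduceIte]
  ring

lemma XHH_eq (a b : ℝ) :
    XHH a b = fun x => ![x 2, x 3, -(a * x 1 ^ 2 + 3 * b * x 0 ^ 2), -(2 * a * x 0 * x 1)] := by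
  funext x
  rw [XHH, pd_VHH_zero, pd_VHH_one]

lemma PtHH_swap (a b : ℝ) (x : Fin 4 → ℝ) (i j : Fin 4) : PtHH a b x j i = -PtHH a b x i j := by
  fin_cases i <;> fin_cases j <;> simp [PtHH]

theorem lieDerivBiv_XHH_PtHH_of_lt (a b : ℝ) {i j : Fin 4} (hij : i < j) (x : Fin 4 → ℝ) :
    lieDerivBiv (XHH a b) (PtHH a b) i j x = 0 := by
  rw [XHH_eq]
  fin_cases i <;> fin_cases j <;> simp at hij <;>
  · simp (disch := fun_prop) only [lieDerivBiv, Fin.sum_univ_four, PtHH, Matrix.of_apply,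
      Matrix.cons_val', Matrix.cons_val, Matrix.cons_val_zero, Matrix.cons_val_one,
      Matrix.cons_val_fin_one, pd_add, pd_sub, pd_mul, pd_neg, pd_pow, pd_coord, pd_const,
      Fin.zero_eta, Fin.mk_one, Fin.reduceFinMk, Fin.isValue, Fin.reduceEq, ↓reduceIte]
    ring

/-- `P̃` is an invariant of the Hénon–Heiles flow: `L_X P̃ = 0` on all of ℝ⁴. -/
theorem statement0 (a b : ℝ) :
    ∀ (i j : Fin 4) (x : Fin 4 → ℝ), lieDerivBiv (XHH a b) (PtHH a b) i j x = 0 := by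
  intro i j x
  rcases lt_trichotomy i j with hij | rfl | hji
  · exact lieDerivBiv_XHH_PtHH_of_lt a b hij x
  · exact lieDerivBiv_self_eq_zero (PtHH_swap a b) i x
  · rw [lieDerivBiv_swap (PtHH_swap a b), lieDerivBiv_XHH_PtHH_of_lt a b hji x, neg_zero]

end
end

section
/- For the Hénon–Heiles system with potential V(q₁,q₂)=q₁(a q₂²+b q₁²), the vector field Y=2HX is bi-Hamiltonian: for every i=1,…,4 one has Σ_j P̃^{ij} ∂H/∂x^j = 2H·X^i and also Σ_j P^{ij} ∂(H²)/∂x^j = 2H·X^i, where P is the canonical Poisson bivector; equivalently P̃ dH = P d(H²) = 2H X on all of ℝ⁴. -/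
open Real

noncomputable section

/-! `P dF` is the Hamiltonian vector field of `F`, so `P dH = X` (Hamilton's equations) and, by the
chain rule `d(H²) = 2H dH`, `P d(H²) = 2H X`. The identity `P̃ dH = 2H X` is a direct polynomial
computation from the gradient of `H`. -/

theorem fderiv_apply_coord {ι : Type*} [Fintype ι] (j : ι) (x : ι → ℝ) :
    fderiv ℝ (fun y : ι → ℝ => y j) x = ContinuousLinearMap.proj j :=
  (hasFDerivAt_apply j x).fderiv

theorem pd_sq {F : (Fin 4 → ℝ) → ℝ} {x : Fin 4 → ℝ} (hF : DifferentiableAt ℝ F x) (k : Fin 4) :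
    pd (fun y => F y ^ 2) k x = 2 * F x * pd F k x := by
  simp [pd, fderiv_fun_pow 2 hF, mul_assoc]

section HenonHeiles

variable (a b : ℝ) (x : Fin 4 → ℝ)

theorem differentiable_HHH : Differentiable ℝ (HHH a b) := by
  unfold HHH VHH; fun_prop

theorem pd_VHH (k : Fin 4) :
    pd (VHH a b) k x = ![a * x 1 ^ 2 + 3 * b * x 0 ^ 2, 2 * a * x 0 * x 1, 0, 0] k := by
  unfold pd VHH
  fin_cases k <;>
    simp (disch := fun_prop) [fderiv_fun_mul, fderiv_fun_add, fderiv_fun_pow, fderiv_apply_coord,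
      Pi.single_apply] <;> ring

theorem pd_HHH (k : Fin 4) :
    pd (HHH a b) k x = ![a * x 1 ^ 2 + 3 * b * x 0 ^ 2, 2 * a * x 0 * x 1, x 2, x 3] k := by
  unfold pd HHH VHH
  fin_cases k <;>
    simp (disch := fun_prop) [div_eq_mul_inv, fderiv_fun_mul, fderiv_fun_add, fderiv_fun_pow,
      fderiv_apply_coord, Pi.single_apply] <;> ring

theorem sum_Pcan_mul_pd_HHH (i : Fin 4) :
    ∑ j, Pcan i j * pd (HHH a b) j x = XHH a b x i := by
  fin_cases i <;> simp [Fin.sum_univ_four, Pcan, XHH, pd_HHH, pd_VHH]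

theorem sum_PtHH_mul_pd_HHH (i : Fin 4) :
    ∑ j, PtHH a b x i j * pd (HHH a b) j x = 2 * HHH a b x * XHH a b x i := by
  fin_cases i <;> simp [Fin.sum_univ_four, PtHH, XHH, HHH, VHH, pd_HHH, pd_VHH] <;> ring

end HenonHeiles

/-- the vector field `Y = 2HX` is bi-Hamiltonian:
`P̃ dH = 2H·X` and `P d(H²) = 2H·X` on all of ℝ⁴. -/
theorem statement1 (a b : ℝ) :
    ∀ (x : Fin 4 → ℝ) (i : Fin 4),
      (∑ j, PtHH a b x i j * pd (HHH a b) j x) = 2 * HHH a b x * XHH a b x i ∧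
      (∑ j, Pcan i j * pd (fun y => (HHH a b y) ^ 2) j x) = 2 * HHH a b x * XHH a b x i := by
  intro x i
  refine ⟨sum_PtHH_mul_pd_HHH a b x i, ?_⟩
  simp_rw [pd_sq ((differentiable_HHH a b).differentiableAt (x := x)), mul_left_comm (Pcan i _),
    ← Finset.mul_sum, sum_Pcan_mul_pd_HHH]

end
end

section
/- For the Hénon–Heiles system with potential V(q₁,q₂)=q₁(a q₂²+b q₁²), the Poisson bivector P̂=H^{2/3}P̃ is compatible with the bivector H^{10/3}P on the open set {x∈ℝ⁴ : H(x)>0}: their mixed Schouten bracket vanishes, i.e. for all indices i,j,k, Σ_l ( A^{li} ∂B^{jk}/∂x^l + A^{lj} ∂B^{ki}/∂x^l + A^{lk} ∂B^{ij}/∂x^l + B^{li} ∂A^{jk}/∂x^l + B^{lj} ∂A^{ki}/∂x^l + B^{lk} ∂A^{ij}/∂x^l ) = 0, where A=H^{2/3}P̃ and B=H^{10/3}P. -/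
/-! For `H > 0` and a constant bivector `P₀`, the Leibniz rule for the Schouten bracket gives
`[H^α P, H^β P₀]^{ijk} = H^(α+β-1) Σ_cyc (β (P^{·i}·∇H) P₀^{jk} + α (P₀^{·i}·∇H) P^{jk} + H (P₀^{·i}·∇) P^{jk})`.
For `α = 2/3`, `β = 10/3` the prefactor is `H³`, and the cyclic sum is a polynomial in `q, p, a, b`
that vanishes identically for `P = P̃`, `P₀ = P`. -/

open Real

noncomputable section

/-- The bivector `A = H^{2/3} P̃`. -/
def AHH (a b : ℝ) (x : Fin 4 → ℝ) : Matrix (Fin 4) (Fin 4) ℝ :=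
  Matrix.of fun i j => (HHH a b x) ^ ((2 : ℝ) / 3) * PtHH a b x i j

/-- The bivector `B = H^{10/3} P`. -/
def BHH (a b : ℝ) (x : Fin 4 → ℝ) : Matrix (Fin 4) (Fin 4) ℝ :=
  Matrix.of fun i j => (HHH a b x) ^ ((10 : ℝ) / 3) * Pcan i j

theorem sum_mul_pd_eq_fderiv (F : (Fin 4 → ℝ) → ℝ) (x c : Fin 4 → ℝ) :
    ∑ l, c l * pd F l x = fderiv ℝ F x c := by
  conv_rhs => rw [pi_eq_sum_univ' c]
  simp only [map_sum, map_smul, smul_eq_mul, pd]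

theorem pd_rpow_mul {H F : (Fin 4 → ℝ) → ℝ} {x : Fin 4 → ℝ} (α : ℝ)
    (hH : DifferentiableAt ℝ H x) (hpos : 0 < H x) (hF : DifferentiableAt ℝ F x) (l : Fin 4) :
    pd (fun y => H y ^ α * F y) l x =
      H x ^ α * pd F l x + F x * (α * H x ^ (α - 1) * pd H l x) := by
  rw [pd, fderiv_fun_mul (hH.rpow_const (Or.inl hpos.ne')) hF,
    (hH.hasFDerivAt.rpow_const (Or.inl hpos.ne')).fderiv]
  simp only [add_apply, smul_apply, smul_eq_mul, pd]

def weightedSchoutenTerm (H : (Fin 4 → ℝ) → ℝ) (P : (Fin 4 → ℝ) → Matrix (Fin 4) (Fin 4) ℝ)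
    (P₀ : Matrix (Fin 4) (Fin 4) ℝ) (α β : ℝ) (x : Fin 4 → ℝ) (i j k : Fin 4) : ℝ :=
  β * fderiv ℝ H x (fun l => P x l i) * P₀ j k + α * fderiv ℝ H x (fun l => P₀ l i) * P x j k
    + H x * fderiv ℝ (fun y => P y j k) x (fun l => P₀ l i)

theorem mixedSchouten_rpow_mul {H : (Fin 4 → ℝ) → ℝ} {P : (Fin 4 → ℝ) → Matrix (Fin 4) (Fin 4) ℝ}
    (P₀ : Matrix (Fin 4) (Fin 4) ℝ) (α β : ℝ) {x : Fin 4 → ℝ}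
    (hH : DifferentiableAt ℝ H x) (hpos : 0 < H x)
    (hP : ∀ i j, DifferentiableAt ℝ (fun y => P y i j) x) (i j k : Fin 4) :
    mixedSchouten (fun y => Matrix.of fun i j => H y ^ α * P y i j)
        (fun y => Matrix.of fun i j => H y ^ β * P₀ i j) i j k x =
      H x ^ (α + β - 1) * (weightedSchoutenTerm H P P₀ α β x i j k
        + weightedSchoutenTerm H P P₀ α β x j k i + weightedSchoutenTerm H P P₀ α β x k i j) := by
  have e₁ : H x ^ α * H x ^ (β - 1) = H x ^ (α + β - 1) := by
    rw [← rpow_add hpos]; ring_nf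
  have e₂ : H x ^ β * H x ^ α = H x ^ (α + β - 1) * H x := by
    rw [← rpow_add hpos, ← rpow_add_one hpos.ne']; ring_nf
  have e₃ : H x ^ β * H x ^ (α - 1) = H x ^ (α + β - 1) := by
    rw [← rpow_add hpos]; ring_nf
  have pair : ∀ i j k l, H x ^ α * P x l i * pd (fun y => H y ^ β * P₀ j k) l x
      + H x ^ β * P₀ l i * pd (fun y => H y ^ α * P y j k) l x
      = H x ^ (α + β - 1) * (β * (P x l i * pd H l x) * P₀ j k + α * (P₀ l i * pd H l x) * P x j k
        + H x * (P₀ l i * pd (fun y => P y j k) l x)) := by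
    intro i j k l
    rw [pd_rpow_mul α hH hpos (hP j k), pd_rpow_mul β hH hpos (differentiableAt_const _),
      pd, fderiv_fun_const, Pi.zero_apply, zero_apply]
    linear_combination (β * P x l i * pd H l x * P₀ j k) * e₁
      + (P₀ l i * pd (fun y => P y j k) l x) * e₂ + (α * P₀ l i * pd H l x * P x j k) * e₃
  simp only [weightedSchoutenTerm, ← sum_mul_pd_eq_fderiv, Finset.mul_sum, Finset.sum_mul,
    ← Finset.sum_add_distrib, mixedSchouten, Matrix.of_apply]
  refine Finset.sum_congr rfl fun l _ => ?_
  linear_combination pair i j k l + pair j k i l + pair k i j l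

theorem fderiv_HHH_apply (a b : ℝ) (x v : Fin 4 → ℝ) :
    fderiv ℝ (HHH a b) x v =
      (a * x 1 ^ 2 + 3 * b * x 0 ^ 2) * v 0 + 2 * a * x 0 * x 1 * v 1 + x 2 * v 2 + x 3 * v 3 := by
  have h : HHH a b = fun y => 2⁻¹ * (y 2 ^ 2 + y 3 ^ 2) + y 0 * (a * y 1 ^ 2 + b * y 0 ^ 2) := by
    funext y; simp only [HHH, VHH]; ring
  rw [h]
  simp (disch := fun_prop) only [fderiv_fun_add, fderiv_fun_mul, fderiv_fun_pow, fderiv_apply,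
    fderiv_fun_id, fderiv_fun_const, add_apply, smul_apply, ContinuousLinearMap.comp_apply,
    ContinuousLinearMap.proj_apply, ContinuousLinearMap.id_apply, Pi.zero_apply, zero_apply,
    smul_eq_mul]
  ring

def dPtHH (a b : ℝ) (x v : Fin 4 → ℝ) : Matrix (Fin 4) (Fin 4) ℝ :=
  let q1 := x 0; let q2 := x 1; let p1 := x 2; let p2 := x 3
  let e12 := (4 / 3) * (v 1 * p1 + q2 * v 2 - v 0 * p2 - q1 * v 3)
  let e13 := 2 * p1 * v 2 - 2 * p2 * v 3 - (2 / 3) * a * (v 0 * q2 ^ 2 + 2 * q1 * q2 * v 1)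
    + 6 * b * q1 ^ 2 * v 0
  let e14 := 2 * (v 2 * p2 + p1 * v 3) + (8 / 3) * a * (2 * q1 * q2 * v 0 + q1 ^ 2 * v 1)
  let e23 := 2 * (v 2 * p2 + p1 * v 3) + 4 * a * q2 ^ 2 * v 1
    + 4 * b * (2 * q1 * q2 * v 0 + q1 ^ 2 * v 1)
  let e34 := 4 * a * (v 0 * q2 * p1 + q1 * v 1 * p1 + q1 * q2 * v 2)
    - (4 * a * q2 * v 1 + 12 * b * q1 * v 0) * p2 - (2 * a * q2 ^ 2 + 6 * b * q1 ^ 2) * v 3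
  !![0, e12, e13, e14;
     -(e12), 0, e23, -(e13);
     -(e13), -(e23), 0, e34;
     -(e14), e13, -(e34), 0]

theorem differentiableAt_PtHH (a b : ℝ) (x : Fin 4 → ℝ) (i j : Fin 4) :
    DifferentiableAt ℝ (fun y => PtHH a b y i j) x := by
  fin_cases i <;> fin_cases j <;>
    · simp only [PtHH, Matrix.of_apply, Matrix.cons_val', Matrix.cons_val_zero,
        Matrix.cons_val_one, Matrix.cons_val_two, Matrix.cons_val_three, Matrix.tail_cons,
        Matrix.head_cons, Matrix.empty_val', Matrix.cons_val_fin_one, Matrix.head_fin_const,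
        Fin.isValue, Fin.zero_eta, Fin.mk_one, Fin.reduceFinMk]
      fun_prop

theorem fderiv_PtHH_apply (a b : ℝ) (x v : Fin 4 → ℝ) (i j : Fin 4) :
    fderiv ℝ (fun y => PtHH a b y i j) x v = dPtHH a b x v i j := by
  fin_cases i <;> fin_cases j <;>
    · simp only [PtHH, dPtHH, Matrix.of_apply, Matrix.cons_val', Matrix.cons_val_zero,
        Matrix.cons_val_one, Matrix.cons_val_two, Matrix.cons_val_three, Matrix.tail_cons,
        Matrix.head_cons, Matrix.empty_val', Matrix.cons_val_fin_one, Matrix.head_fin_const,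
        Fin.isValue, Fin.zero_eta, Fin.mk_one, Fin.reduceFinMk]
      simp (disch := fun_prop) only [fderiv_fun_add, fderiv_fun_sub, fderiv_fun_neg,
        fderiv_fun_mul, fderiv_fun_pow, fderiv_apply, fderiv_fun_id, fderiv_fun_const, add_apply,
        sub_apply, neg_apply, smul_apply, ContinuousLinearMap.comp_apply,
        ContinuousLinearMap.proj_apply, ContinuousLinearMap.id_apply, Pi.zero_apply, zero_apply,
        smul_eq_mul] <;>
      ring

theorem weightedSchoutenTerm_PtHH_cyclic_sum_eq_zero (a b : ℝ) (x : Fin 4 → ℝ) (i j k : Fin 4) :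
    weightedSchoutenTerm (HHH a b) (PtHH a b) Pcan (2 / 3) (10 / 3) x i j k
      + weightedSchoutenTerm (HHH a b) (PtHH a b) Pcan (2 / 3) (10 / 3) x j k i
      + weightedSchoutenTerm (HHH a b) (PtHH a b) Pcan (2 / 3) (10 / 3) x k i j = 0 := by
  simp only [weightedSchoutenTerm, fderiv_HHH_apply, fderiv_PtHH_apply]
  fin_cases i <;> fin_cases j <;> fin_cases k <;>
    · simp only [PtHH, dPtHH, Pcan, HHH, VHH, Matrix.of_apply, Matrix.cons_val',
        Matrix.cons_val_zero, Matrix.cons_val_one, Matrix.cons_val_two, Matrix.cons_val_three,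
        Matrix.tail_cons, Matrix.head_cons, Matrix.empty_val', Matrix.cons_val_fin_one,
        Matrix.head_fin_const, Fin.isValue, Fin.zero_eta, Fin.mk_one, Fin.reduceFinMk]
      ring

/-- the mixed Schouten bracket of `A = H^{2/3}P̃` and `B = H^{10/3}P`
vanishes on the set `{H > 0}`. -/
theorem statement3 (a b : ℝ) :
    ∀ x : Fin 4 → ℝ, 0 < HHH a b x →
      ∀ i j k : Fin 4, mixedSchouten (AHH a b) (BHH a b) i j k x = 0 := by
  intro x hx i j k
  have hH : DifferentiableAt ℝ (HHH a b) x := by unfold HHH VHH; fun_prop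
  refine (mixedSchouten_rpow_mul Pcan (2 / 3) (10 / 3) hH hx
    (differentiableAt_PtHH a b x) i j k).trans ?_
  rw [weightedSchoutenTerm_PtHH_cyclic_sum_eq_zero, mul_zero]
end
end

section
/- For the Hénon–Heiles system with potential V(q₁,q₂)=q₁(a q₂²+b q₁²), the explicit bivector P̃ and the explicit 2-form ω̃ are inverse to each other up to the factor H²: for all indices i,j one has Σ_k P̃^{ik} ω̃_{kj} = H² δ^i_j on all of ℝ⁴, where δ is the Kronecker delta; in particular, on the set where H≠0, ω̃/H² is a symplectic form whose inverse bivector is P̃. -/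
open Real

noncomputable section

/-- `P̃` and `ω̃` are inverse to each other up to the factor `H²`:
`Σ_k P̃^{ik} ω̃_{kj} = H² δ^i_j` on all of ℝ⁴. -/
theorem statement5 (a b : ℝ) :
    ∀ (x : Fin 4 → ℝ) (i j : Fin 4),
      (∑ k, PtHH a b x i k * OmHH a b x k j) =
        (HHH a b x) ^ 2 * (if i = j then 1 else 0) := by
  intro x i j
  fin_cases i <;> fin_cases j <;>
    simp [Fin.sum_univ_four, PtHH, OmHH, HHH, VHH, Matrix.cons_val', Matrix.cons_val_zero,
      Matrix.cons_val_one, Matrix.head_cons, Matrix.of_apply] <;> ring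

end
end
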